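/- arXiv:2501.05645 — 2 statements merged into one kernel-verified Lean document; each statement's English description precedes it below -/
import Mathlib

section
/- Fix k ≥ 2 and arbitrary vectors g_1, …, g_k ∈ ℝ^N. Then the optimal value of the constrained program sup { Σ_{i=1}^k ⟨u_i, g_i⟩ : u = (u_1,…,u_k) dual feasible for the MOT program with Σ_{i=1}^k u_i = 0 } is at most the optimal value of the relaxed program sup { Σ_{i=2}^k ⟨u_i, g_i − g_1⟩ : for each i = 2,…,k and all j, l ∈ {1,…,N}, u_i(j) − u_i(l) ≤ ((k−1)/k²)·‖x_j − x_l‖² }. (This is the deterministic domination UB_0 ≥ X_0 underlying the upper bound on the null limiting distribution.) -/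
/-!
If `∑ i, u i = 0`, then on the tuple with `x_j` in slot `i` and `x_l` in every other slot the dual
objective `∑ m, u_m(t_m)` equals `u_i(j) - u_i(l)`, while the cost of that tuple is
`((k-1)/k²)‖x_j - x_l‖²`; so dual feasibility implies the relaxed constraints. Eliminating
`u_1 = -∑_{i≥2} u_i` turns the objective into the relaxed one, so every value of the first program
is a value of the second. When the masses `∑_j g_i(j)` all agree, each `u_i` is paired with a
vector of sum zero and has bounded oscillation, so the relaxed values are bounded and the suprema
compare. Otherwise the constant duals `u_i ≡ c`, `u_1 ≡ -c` make both programs unbounded, and both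
`sSup`s take the junk value `0`.
-/

open scoped BigOperators

/-- The variance cost of the tuple `(x_{t 1}, …, x_{t k})`. -/
noncomputable def motCost {d k N : ℕ} (x : Fin N → EuclideanSpace ℝ (Fin d))
    (t : Fin k → Fin N) : ℝ :=
  (k : ℝ)⁻¹ * ∑ i, ‖x (t i) - (k : ℝ)⁻¹ • ∑ m, x (t m)‖ ^ 2

/-- Dual feasibility for the MOT program: for every tuple `(j_1,…,j_k)`,
`∑ i u_i(j_i) ≤ c(j_1,…,j_k)`. -/
def DualFeasible {d k N : ℕ} (x : Fin N → EuclideanSpace ℝ (Fin d))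
    (u : Fin k → Fin N → ℝ) : Prop :=
  ∀ t : Fin k → Fin N, ∑ i, u i (t i) ≤ motCost x t

lemma Real.sSup_le_sSup_of_subset {A B : Set ℝ} (hA : A.Nonempty) (hAB : A ⊆ B)
    (hbdd : BddAbove A → BddAbove B) : sSup A ≤ sSup B := by
  by_cases hB : BddAbove B
  · exact csSup_le_csSup hB hA hAB
  · rw [Real.sSup_of_not_bddAbove hB, Real.sSup_of_not_bddAbove (mt hbdd hB)]

section Sums

variable {ι κ : Type*} [Fintype ι] [Fintype κ]

lemma sum_sum_mul_eq_sum_filter_ne [DecidableEq ι] {u : ι → κ → ℝ}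
    (hu : ∀ j, ∑ i, u i j = 0) (g : ι → κ → ℝ) (i₀ : ι) :
    ∑ i, ∑ j, u i j * g i j =
      ∑ i ∈ Finset.univ.filter (· ≠ i₀), ∑ j, u i j * (g i j - g i₀ j) := by
  have hshift : ∑ i, ∑ j, u i j * (g i j - g i₀ j) = ∑ i, ∑ j, u i j * g i j := by
    simp only [mul_sub, Finset.sum_sub_distrib, sub_eq_self]
    rw [Finset.sum_comm]
    simp [← Finset.sum_mul, hu]
  rw [← hshift, Finset.sum_filter_of_ne]
  rintro i - hi rfl
  simp at hi

lemma sum_mul_le_of_sum_eq_zero {u h : κ → ℝ} {M : ℝ} (hh : ∑ j, h j = 0)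
    (hu : ∀ j l, u j - u l ≤ M) : ∑ j, u j * h j ≤ M * ∑ j, |h j| := by
  cases isEmpty_or_nonempty κ with
  | inl _ => simp
  | inr hne =>
    obtain ⟨l⟩ := hne
    have hshift : ∑ j, u j * h j = ∑ j, (u j - u l) * h j := by
      simp [sub_mul, Finset.sum_sub_distrib, ← Finset.mul_sum, hh]
    rw [hshift, Finset.mul_sum]
    refine Finset.sum_le_sum fun j _ => ?_
    calc (u j - u l) * h j ≤ |u j - u l| * |h j| := by rw [← abs_mul]; exact le_abs_self _
      _ ≤ M * |h j| := by
        gcongr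
        exact abs_sub_le_iff.mpr ⟨hu j l, hu l j⟩

end Sums

section MOT

variable {d k N : ℕ} (x : Fin N → EuclideanSpace ℝ (Fin d))

lemma motCost_nonneg (t : Fin k → Fin N) : 0 ≤ motCost x t := by
  unfold motCost
  positivity

lemma motCost_update_const (i : Fin k) (j l : Fin N) :
    motCost x (Function.update (fun _ => l) i j)
      = ((k : ℝ) - 1) / (k : ℝ) ^ 2 * ‖x j - x l‖ ^ 2 := by
  have hk : (k : ℝ) ≠ 0 := by have := i.pos; positivity
  set t : Fin k → Fin N := Function.update (fun _ => l) i j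
  have hpt : ∀ m, x (t m) = x l + (Pi.single i (x j - x l) : Fin k → _) m := by
    intro m
    by_cases hm : m = i
    · subst hm; simp [t]
    · simp [t, hm]
  have hsum : ∑ m, x (t m) = (k : ℝ) • x l + (x j - x l) := by
    simp [hpt, Finset.sum_add_distrib, ← Nat.cast_smul_eq_nsmul ℝ]
  have hdev : ∀ m, x (t m) - (k : ℝ)⁻¹ • ∑ m', x (t m')
      = ((if m = i then 1 else 0) - (k : ℝ)⁻¹) • (x j - x l) := by
    intro m
    rw [hsum, smul_add, smul_smul, inv_mul_cancel₀ hk, one_smul]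
    by_cases hm : m = i
    · subst hm; simp [t, sub_smul]; abel
    · simp [t, hm]
  have hcoef : ∑ m : Fin k, ((if m = i then 1 else 0) - (k : ℝ)⁻¹) ^ 2 = ((k : ℝ) - 1) / k := by
    have hsq : ∀ m, ((if m = i then 1 else 0) - (k : ℝ)⁻¹) ^ 2
        = if m = i then (1 - (k : ℝ)⁻¹) ^ 2 else (k : ℝ)⁻¹ ^ 2 := by
      intro m; split_ifs <;> ring
    simp [hsq, Finset.sum_ite, Finset.filter_eq', Finset.filter_ne', Nat.cast_sub i.pos]
    field_simp
    ring
  simp only [motCost, hdev, norm_smul, mul_pow, Real.norm_eq_abs, sq_abs, ← Finset.sum_mul, hcoef]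
  field_simp

lemma DualFeasible.sub_le {u : Fin k → Fin N → ℝ} (hu : DualFeasible x u)
    (hz : ∀ j, ∑ i, u i j = 0) (i : Fin k) (j l : Fin N) :
    u i j - u i l ≤ ((k : ℝ) - 1) / (k : ℝ) ^ 2 * ‖x j - x l‖ ^ 2 := by
  have hpay : ∑ m, u m (Function.update (fun _ => l) i j m) = u i j - u i l := by
    rw [← sub_zero (∑ m, _), ← hz l, ← Finset.sum_sub_distrib, Finset.sum_eq_single i]
    · simp
    · intro m _ hm
      simp [Function.update_of_ne hm]
    · simp
  rw [← hpay, ← motCost_update_const]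
  exact hu _

def nullDualValues (g : Fin k → Fin N → ℝ) : Set ℝ :=
  {v | ∃ u : Fin k → Fin N → ℝ, DualFeasible x u ∧
    (∀ j, ∑ i, u i j = 0) ∧ v = ∑ i, ∑ j, u i j * g i j}

def relaxedDualValues (g : Fin k → Fin N → ℝ) (i₀ : Fin k) : Set ℝ :=
  {v | ∃ u : Fin k → Fin N → ℝ,
    (∀ i, i ≠ i₀ → ∀ j l, u i j - u i l ≤ ((k : ℝ) - 1) / (k : ℝ) ^ 2 * ‖x j - x l‖ ^ 2) ∧
    v = ∑ i ∈ Finset.univ.filter (· ≠ i₀), ∑ j, u i j * (g i j - g i₀ j)}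

lemma zero_mem_nullDualValues (g : Fin k → Fin N → ℝ) : 0 ∈ nullDualValues x g :=
  ⟨0, fun t => by simpa using motCost_nonneg x t, by simp, by simp⟩

lemma nullDualValues_subset_relaxedDualValues (g : Fin k → Fin N → ℝ) (i₀ : Fin k) :
    nullDualValues x g ⊆ relaxedDualValues x g i₀ := by
  rintro v ⟨u, hu, hz, rfl⟩
  exact ⟨u, fun i _ => hu.sub_le x hz i, sum_sum_mul_eq_sum_filter_ne hz g i₀⟩

lemma bddAbove_relaxedDualValues {g : Fin k → Fin N → ℝ} {i₀ : Fin k}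
    (hg : ∀ i, ∑ j, g i j = ∑ j, g i₀ j) : BddAbove (relaxedDualValues x g i₀) := by
  obtain ⟨M, hM⟩ := (Set.finite_range fun p : Fin N × Fin N =>
    ((k : ℝ) - 1) / (k : ℝ) ^ 2 * ‖x p.1 - x p.2‖ ^ 2).bddAbove
  refine ⟨∑ i ∈ Finset.univ.filter (· ≠ i₀), M * ∑ j, |g i j - g i₀ j|, ?_⟩
  rintro v ⟨u, hu, rfl⟩
  refine Finset.sum_le_sum fun i hi => sum_mul_le_of_sum_eq_zero ?_ fun j l => ?_
  · simp [Finset.sum_sub_distrib, hg i]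
  · exact (hu i (Finset.mem_filter.mp hi).2 j l).trans (hM ⟨(j, l), rfl⟩)

lemma not_bddAbove_nullDualValues {g : Fin k → Fin N → ℝ} {i i₀ : Fin k}
    (hg : ∑ j, g i j ≠ ∑ j, g i₀ j) : ¬ BddAbove (nullDualValues x g) := by
  have hmem : ∀ c : ℝ, c * (∑ j, g i j - ∑ j, g i₀ j) ∈ nullDualValues x g := by
    intro c
    have hz : ∑ i', (Pi.single i c - Pi.single i₀ c : Fin k → ℝ) i' = 0 := by
      simp [Finset.sum_sub_distrib]
    refine ⟨fun i' _ => (Pi.single i c - Pi.single i₀ c : Fin k → ℝ) i', fun t => ?_,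
      fun _ => hz, ?_⟩
    · rw [hz]; exact motCost_nonneg x t
    · simp [← Finset.mul_sum, Finset.sum_sub_distrib, sub_mul, Pi.single_apply, mul_sub]
  rintro ⟨M, hM⟩
  have := hM (hmem ((M + 1) / (∑ j, g i j - ∑ j, g i₀ j)))
  rw [div_mul_cancel₀ _ (sub_ne_zero.mpr hg)] at this
  linarith

end MOT

/-- deterministic domination `UB₀ ≥ X₀`.  For arbitrary vectors
`g_1,…,g_k ∈ ℝ^N`, the optimal value of the null-limit program
`sup { ∑ i ⟨u_i, g_i⟩ : u dual feasible, ∑ i u_i = 0 }` is at most the optimal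
value of the relaxed program
`sup { ∑_{i≥2} ⟨u_i, g_i − g_1⟩ : u_i(j) − u_i(l) ≤ ((k−1)/k²)‖x_j − x_l‖² }`. -/
theorem null_limit_le_upper_bound {d k N : ℕ} (hk : 2 ≤ k)
    (x : Fin N → EuclideanSpace ℝ (Fin d))
    (g : Fin k → Fin N → ℝ) :
    sSup {v : ℝ | ∃ u : Fin k → Fin N → ℝ, DualFeasible x u ∧
        (∀ j, ∑ i, u i j = 0) ∧ v = ∑ i, ∑ j, u i j * g i j} ≤
    sSup {v : ℝ | ∃ u : Fin k → Fin N → ℝ,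
        (∀ i : Fin k, i ≠ ⟨0, by omega⟩ → ∀ j l : Fin N,
          u i j - u i l ≤ ((k : ℝ) - 1) / (k : ℝ) ^ 2 * ‖x j - x l‖ ^ 2) ∧
        v = ∑ i ∈ Finset.univ.filter (fun i : Fin k => i ≠ ⟨0, by omega⟩),
              ∑ j, u i j * (g i j - g ⟨0, by omega⟩ j)} := by
  refine Real.sSup_le_sSup_of_subset ⟨0, zero_mem_nullDualValues x g⟩
    (nullDualValues_subset_relaxedDualValues x g _) fun hbdd => ?_
  by_cases hg : ∀ i, ∑ j, g i j = ∑ j, g ⟨0, by omega⟩ j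
  · exact bddAbove_relaxedDualValues x hg
  · obtain ⟨i, hi⟩ := not_forall.mp hg
    exact absurd hbdd (not_bddAbove_nullDualValues x hi)
end

section
/- Fix k ≥ 2 and probability measures α, β on X, and consider the 'sparse' collection (μ_1,…,μ_k) with μ_1 = ⋯ = μ_{k−1} = α and μ_k = β. Then MOT(μ_1,…,μ_k) = ((k−1)/k²)·W₂²(α, β). -/
open scoped BigOperators

/-- A probability measure on a finite set with `N` points. -/
def IsProbVec {N : ℕ} (μ : Fin N → ℝ) : Prop :=
  (∀ j, 0 ≤ μ j) ∧ ∑ j, μ j = 1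

/-- A multicoupling of `(μ_1,…,μ_k)`. -/
def IsMulticoupling {k N : ℕ} (μ : Fin k → Fin N → ℝ)
    (π : (Fin k → Fin N) → ℝ) : Prop :=
  (∀ t, 0 ≤ π t) ∧ (∑ t, π t = 1) ∧
    ∀ (i : Fin k) (j : Fin N),
      ∑ t ∈ Finset.univ.filter (fun t : Fin k → Fin N => t i = j), π t = μ i j

/-- The optimal value of the multimarginal optimal transport program. -/
noncomputable def MOT {d k N : ℕ} (x : Fin N → EuclideanSpace ℝ (Fin d))
    (μ : Fin k → Fin N → ℝ) : ℝ :=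
  sInf {v | ∃ π, IsMulticoupling μ π ∧ v = ∑ t, motCost x t * π t}

/-- The squared 2-Wasserstein distance between two measures on `X`. -/
noncomputable def W2sq {d N : ℕ} (x : Fin N → EuclideanSpace ℝ (Fin d))
    (α β : Fin N → ℝ) : ℝ :=
  sInf {v | ∃ γ : Fin N → Fin N → ℝ,
    (∀ j l, 0 ≤ γ j l) ∧ (∑ j, ∑ l, γ j l = 1) ∧
    (∀ j, ∑ l, γ j l = α j) ∧ (∀ l, ∑ j, γ j l = β l) ∧
    v = ∑ j, ∑ l, ‖x j - x l‖ ^ 2 * γ j l}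

/-!
Writing the variance cost as `(2k²)⁻¹ ∑ᵢ ∑ⱼ ‖x_{tᵢ} - x_{tⱼ}‖²`, the tuple `(a, …, a, b)` costs
`(k-1)/k² · ‖x_a - x_b‖²`, so pushing a coupling of `(α, β)` forward along `(a, b) ↦ (a, …, a, b)`
gives a multicoupling of cost `(k-1)/k²` times its transport cost. Conversely, dropping the pairs
that avoid the last index bounds the cost of any tuple `t` below by `k⁻² ∑_{i<k} ‖x_{tᵢ} - x_{t_k}‖²`,
and the average over `i < k` of the `(i, k)`-marginals of a multicoupling is a coupling of `(α, β)`
whose transport cost is at most `k²/(k-1)` times that of the multicoupling.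
-/

open Finset

theorem sum_sum_norm_sub_sq_eq {E ι : Type*} [NormedAddCommGroup E] [InnerProductSpace ℝ E]
    [Fintype ι] [Nonempty ι] (y : ι → E) :
    ∑ i, ∑ j, ‖y i - y j‖ ^ 2 =
      2 * Fintype.card ι * ∑ i, ‖y i - (Fintype.card ι : ℝ)⁻¹ • ∑ m, y m‖ ^ 2 := by
  set z : ι → E := fun i => y i - (Fintype.card ι : ℝ)⁻¹ • ∑ m, y m
  have hz : ∑ i, z i = 0 := by
    simp [z, sum_sub_distrib, ← Nat.cast_smul_eq_nsmul ℝ, smul_smul]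
  have hyz : ∀ i j, y i - y j = z i - z j := fun i j => by simp [z]
  change _ = 2 * _ * ∑ i, ‖z i‖ ^ 2
  simp_rw [hyz, norm_sub_sq_real, sum_add_distrib, sum_sub_distrib, ← mul_sum, ← inner_sum,
    ← sum_inner, hz, inner_zero_left]
  simp only [sum_const, card_univ, nsmul_eq_mul, ← mul_sum]
  ring

theorem motCost_eq_sum_sum {d k N : ℕ} [NeZero k] (x : Fin N → EuclideanSpace ℝ (Fin d))
    (t : Fin k → Fin N) :
    motCost x t = (2 * (k : ℝ) ^ 2)⁻¹ * ∑ i, ∑ j, ‖x (t i) - x (t j)‖ ^ 2 := by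
  have hk : (k : ℝ) ≠ 0 := NeZero.ne _
  rw [motCost, sum_sum_norm_sub_sq_eq (fun i => x (t i)), Fintype.card_fin]
  field_simp

theorem two_mul_sum_castSucc_last_le {n : ℕ} (H : Fin (n + 1) → Fin (n + 1) → ℝ)
    (h0 : ∀ i j, 0 ≤ H i j) (hsymm : ∀ i j, H i j = H j i) :
    2 * ∑ i : Fin n, H i.castSucc (Fin.last n) ≤ ∑ i, ∑ j, H i j := by
  have hrow : ∀ i : Fin n, H i.castSucc (Fin.last n) ≤ ∑ j, H i.castSucc j :=
    fun i => single_le_sum (fun j _ => h0 _ j) (mem_univ _)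
  have hlast : ∑ i : Fin n, H i.castSucc (Fin.last n) ≤ ∑ j, H (Fin.last n) j := by
    rw [Fin.sum_univ_castSucc]
    simp_rw [hsymm (Fin.last n)]
    linarith [h0 (Fin.last n) (Fin.last n)]
  rw [Fin.sum_univ_castSucc (fun i => ∑ j, H i j)]
  linarith [sum_le_sum fun i (_ : i ∈ univ) => hrow i]

theorem Fintype.sum_filter_fst_eq {A B M : Type*} [Fintype A] [Fintype B] [DecidableEq A]
    [AddCommMonoid M] (w : A × B → M) (a : A) :
    ∑ p with p.1 = a, w p = ∑ b, w (a, b) := by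
  rw [sum_filter, Fintype.sum_prod_type, sum_comm]
  simp

theorem Fintype.sum_filter_snd_eq {A B M : Type*} [Fintype A] [Fintype B] [DecidableEq B]
    [AddCommMonoid M] (w : A × B → M) (b : B) :
    ∑ p with p.2 = b, w p = ∑ a, w (a, b) := by
  rw [sum_filter, Fintype.sum_prod_type_right, sum_comm]
  simp

section Pushforward

variable {S T : Type*} [Fintype S] [DecidableEq T]

def pushforward (f : S → T) (w : S → ℝ) (t : T) : ℝ :=
  ∑ s, if f s = t then w s else 0

variable {f : S → T} {w : S → ℝ}

theorem pushforward_nonneg (hw : ∀ s, 0 ≤ w s) (t : T) : 0 ≤ pushforward f w t :=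
  sum_nonneg fun s _ => by split_ifs <;> simp [hw s]

variable [Fintype T]

theorem sum_mul_pushforward (g : T → ℝ) :
    ∑ t, g t * pushforward f w t = ∑ s, g (f s) * w s := by
  simp only [pushforward, mul_sum, mul_ite, mul_zero]
  rw [sum_comm]
  simp only [sum_ite_eq, mem_univ, if_true]

theorem sum_pushforward : ∑ t, pushforward f w t = ∑ s, w s := by
  simpa only [one_mul] using sum_mul_pushforward (f := f) (w := w) fun _ => 1

theorem sum_filter_pushforward (p : T → Prop) [DecidablePred p] :
    ∑ t with p t, pushforward f w t = ∑ s with p (f s), w s := by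
  simpa only [sum_filter, boole_mul] using
    sum_mul_pushforward (f := f) (w := w) fun t => if p t then 1 else 0

end Pushforward

def IsCoupling {N : ℕ} (α β : Fin N → ℝ) (γ : Fin N → Fin N → ℝ) : Prop :=
  (∀ j l, 0 ≤ γ j l) ∧ (∑ j, ∑ l, γ j l = 1) ∧
    (∀ j, ∑ l, γ j l = α j) ∧ (∀ l, ∑ j, γ j l = β l)

theorem W2sq_eq_sInf {d N : ℕ} (x : Fin N → EuclideanSpace ℝ (Fin d)) (α β : Fin N → ℝ) :
    W2sq x α β =
      sInf {v | ∃ γ, IsCoupling α β γ ∧ v = ∑ j, ∑ l, ‖x j - x l‖ ^ 2 * γ j l} := by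
  simp only [W2sq, IsCoupling, and_assoc]

def sparseTuple {N : ℕ} (n : ℕ) (p : Fin N × Fin N) : Fin (n + 1) → Fin N :=
  Fin.snoc (fun _ => p.1) p.2

@[simp]
theorem sparseTuple_castSucc {N n : ℕ} (p : Fin N × Fin N) (i : Fin n) :
    sparseTuple n p i.castSucc = p.1 :=
  Fin.snoc_castSucc ..

@[simp]
theorem sparseTuple_last {N n : ℕ} (p : Fin N × Fin N) : sparseTuple n p (Fin.last n) = p.2 :=
  Fin.snoc_last ..

section Sparse

variable {d N n : ℕ} (x : Fin N → EuclideanSpace ℝ (Fin d)) {α β : Fin N → ℝ}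
  {μ : Fin (n + 1) → Fin N → ℝ}

theorem motCost_sparseTuple (p : Fin N × Fin N) :
    motCost x (sparseTuple n p) = n / ((n : ℝ) + 1) ^ 2 * ‖x p.1 - x p.2‖ ^ 2 := by
  rw [motCost_eq_sum_sum]
  simp only [Fin.sum_univ_castSucc, sparseTuple_castSucc, sparseTuple_last, sub_self, norm_zero,
    norm_sub_rev (x p.2) (x p.1), sum_const, card_univ, Fintype.card_fin, nsmul_eq_mul]
  push_cast
  field_simp
  ring

theorem inv_sq_mul_sum_le_motCost (t : Fin (n + 1) → Fin N) :
    (((n : ℝ) + 1) ^ 2)⁻¹ * ∑ i : Fin n, ‖x (t i.castSucc) - x (t (Fin.last n))‖ ^ 2 ≤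
      motCost x t := by
  have h := two_mul_sum_castSucc_last_le (fun i j => ‖x (t i) - x (t j)‖ ^ 2)
    (fun _ _ => by positivity) (fun i j => by rw [norm_sub_rev])
  rw [motCost_eq_sum_sum]
  push_cast
  calc _ = (2 * ((n : ℝ) + 1) ^ 2)⁻¹ *
        (2 * ∑ i : Fin n, ‖x (t i.castSucc) - x (t (Fin.last n))‖ ^ 2) := by
        field_simp
    _ ≤ _ := mul_le_mul_of_nonneg_left h (by positivity)

theorem isMulticoupling_pushforward_sparseTuple (hα : ∀ i : Fin n, μ i.castSucc = α)
    (hβ : μ (Fin.last n) = β) {γ : Fin N → Fin N → ℝ} (hγ : IsCoupling α β γ) :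
    IsMulticoupling μ (pushforward (sparseTuple n) (Function.uncurry γ)) := by
  obtain ⟨hγ0, hγ1, hγα, hγβ⟩ := hγ
  refine ⟨pushforward_nonneg fun p => hγ0 _ _, ?_, fun i j => ?_⟩
  · rw [sum_pushforward, Fintype.sum_prod_type]
    exact hγ1
  · rw [sum_filter_pushforward]
    induction i using Fin.lastCases with
    | last => simp [Fintype.sum_filter_snd_eq, hβ, hγβ]
    | cast i => simp [Fintype.sum_filter_fst_eq, hα, hγα]

theorem sum_motCost_mul_pushforward_sparseTuple (γ : Fin N → Fin N → ℝ) :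
    ∑ t, motCost x t * pushforward (sparseTuple n) (Function.uncurry γ) t =
      n / ((n : ℝ) + 1) ^ 2 * ∑ j, ∑ l, ‖x j - x l‖ ^ 2 * γ j l := by
  simp_rw [sum_mul_pushforward, motCost_sparseTuple, Fintype.sum_prod_type, mul_sum,
    Function.uncurry_apply_pair, mul_assoc]

noncomputable def lastPairCoupling (π : (Fin (n + 1) → Fin N) → ℝ) (j l : Fin N) : ℝ :=
  (n : ℝ)⁻¹ * ∑ i : Fin n, pushforward (fun t => (t i.castSucc, t (Fin.last n))) π (j, l)

theorem isCoupling_lastPairCoupling (hn : 0 < n) (hα : ∀ i : Fin n, μ i.castSucc = α)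
    (hβ : μ (Fin.last n) = β) {π : (Fin (n + 1) → Fin N) → ℝ} (hπ : IsMulticoupling μ π) :
    IsCoupling α β (lastPairCoupling π) := by
  obtain ⟨hπ0, hπ1, hπμ⟩ := hπ
  have hn' : (n : ℝ) ≠ 0 := by positivity
  refine ⟨fun j l => ?_, ?_, fun j => ?_, fun l => ?_⟩
  · exact mul_nonneg (by positivity) (sum_nonneg fun i _ => pushforward_nonneg hπ0 _)
  · calc ∑ j, ∑ l, lastPairCoupling π j l
          = (n : ℝ)⁻¹ * ∑ p : Fin N × Fin N, ∑ i : Fin n,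
              pushforward (fun t => (t i.castSucc, t (Fin.last n))) π p := by
            rw [mul_sum, Fintype.sum_prod_type]
            rfl
      _ = (n : ℝ)⁻¹ * ∑ i : Fin n, ∑ t, π t := by
            rw [sum_comm]
            simp_rw [sum_pushforward]
      _ = 1 := by simp [hπ1, hn']
  · calc ∑ l, lastPairCoupling π j l
          = (n : ℝ)⁻¹ * ∑ p with p.1 = j, ∑ i : Fin n,
              pushforward (fun t => (t i.castSucc, t (Fin.last n))) π p := by
            rw [Fintype.sum_filter_fst_eq, mul_sum]
            rfl
      _ = (n : ℝ)⁻¹ * ∑ i : Fin n, ∑ t with t i.castSucc = j, π t := by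
            rw [sum_comm]
            simp_rw [sum_filter_pushforward]
      _ = α j := by simp [hπμ, hα, hn']
  · calc ∑ j, lastPairCoupling π j l
          = (n : ℝ)⁻¹ * ∑ p with p.2 = l, ∑ i : Fin n,
              pushforward (fun t => (t i.castSucc, t (Fin.last n))) π p := by
            rw [Fintype.sum_filter_snd_eq, mul_sum]
            rfl
      _ = (n : ℝ)⁻¹ * ∑ i : Fin n, ∑ t with t (Fin.last n) = l, π t := by
            rw [sum_comm]
            simp_rw [sum_filter_pushforward]
      _ = β l := by simp [hπμ, hβ, hn']

theorem sum_sum_mul_lastPairCoupling (π : (Fin (n + 1) → Fin N) → ℝ) :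
    ∑ j, ∑ l, ‖x j - x l‖ ^ 2 * lastPairCoupling π j l =
      (n : ℝ)⁻¹ * ∑ i : Fin n, ∑ t, ‖x (t i.castSucc) - x (t (Fin.last n))‖ ^ 2 * π t := by
  calc ∑ j, ∑ l, ‖x j - x l‖ ^ 2 * lastPairCoupling π j l
      = ∑ p : Fin N × Fin N, (n : ℝ)⁻¹ * ∑ i : Fin n, ‖x p.1 - x p.2‖ ^ 2 *
          pushforward (fun t => (t i.castSucc, t (Fin.last n))) π p := by
        rw [Fintype.sum_prod_type]
        simp_rw [lastPairCoupling, mul_sum]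
        exact sum_congr rfl fun _ _ => sum_congr rfl fun _ _ => sum_congr rfl fun _ _ => by ring
    _ = _ := by
        rw [← mul_sum, sum_comm]
        simp_rw [sum_mul_pushforward]

theorem mul_sum_sum_mul_lastPairCoupling_le (hn : 0 < n) (π : (Fin (n + 1) → Fin N) → ℝ)
    (hπ0 : ∀ t, 0 ≤ π t) :
    n / ((n : ℝ) + 1) ^ 2 * ∑ j, ∑ l, ‖x j - x l‖ ^ 2 * lastPairCoupling π j l ≤
      ∑ t, motCost x t * π t := by
  have hn' : (n : ℝ) ≠ 0 := by positivity
  calc _ = ∑ t, (((n : ℝ) + 1) ^ 2)⁻¹ *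
          ∑ i : Fin n, ‖x (t i.castSucc) - x (t (Fin.last n))‖ ^ 2 * π t := by
        rw [sum_sum_mul_lastPairCoupling, sum_comm, ← mul_sum, ← mul_assoc]
        field_simp
    _ ≤ ∑ t, motCost x t * π t := by
        refine sum_le_sum fun t _ => ?_
        rw [← sum_mul, ← mul_assoc]
        exact mul_le_mul_of_nonneg_right (inv_sq_mul_sum_le_motCost x t) (hπ0 t)

end Sparse

theorem MOT_eq_mul_W2sq {d N n : ℕ} (hn : 0 < n) (x : Fin N → EuclideanSpace ℝ (Fin d))
    {α β : Fin N → ℝ} {μ : Fin (n + 1) → Fin N → ℝ} (hα : ∀ i : Fin n, μ i.castSucc = α)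
    (hβ : μ (Fin.last n) = β) :
    MOT x μ = n / ((n : ℝ) + 1) ^ 2 * W2sq x α β := by
  rw [W2sq_eq_sInf, ← smul_eq_mul, ← Real.sInf_smul_of_nonneg (by positivity)]
  apply csInf_eq_csInf_of_forall_exists_le
  · rintro _ ⟨π, hπ, rfl⟩
    exact ⟨_, Set.smul_mem_smul_set ⟨_, isCoupling_lastPairCoupling hn hα hβ hπ, rfl⟩,
      mul_sum_sum_mul_lastPairCoupling_le x hn π hπ.1⟩
  · rintro _ ⟨_, ⟨γ, hγ, rfl⟩, rfl⟩
    exact ⟨_, ⟨_, isMulticoupling_pushforward_sparseTuple hα hβ hγ, rfl⟩,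
      (sum_motCost_mul_pushforward_sparseTuple x γ).le⟩

/-- `MOT` values for "sparse" alternatives.  If
`μ_1 = ⋯ = μ_{k−1} = α` and `μ_k = β`, then
`MOT(μ_1,…,μ_k) = ((k−1)/k²)·W₂²(α, β)`. -/
theorem mot_sparse {d k N : ℕ} (hk : 2 ≤ k)
    (x : Fin N → EuclideanSpace ℝ (Fin d))
    (α β : Fin N → ℝ)
    (μ : Fin k → Fin N → ℝ)
    (hμ₁ : ∀ i : Fin k, (i : ℕ) < k - 1 → μ i = α)
    (hμ₂ : μ ⟨k - 1, by omega⟩ = β) :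
    MOT x μ = ((k : ℝ) - 1) / (k : ℝ) ^ 2 * W2sq x α β := by
  obtain ⟨n, rfl⟩ : ∃ n, k = n + 1 := ⟨k - 1, by omega⟩
  have hlast : (⟨n + 1 - 1, by omega⟩ : Fin (n + 1)) = Fin.last n := Fin.ext (by simp)
  rw [MOT_eq_mul_W2sq (by omega) x (fun i => hμ₁ _ (by simp)) (hlast ▸ hμ₂)]
  push_cast
  ring
end
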